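/- arXiv:1511.03564 — 2 statements merged into one kernel-verified Lean document; each statement's English description precedes it below -/
import Mathlib

section
/- Let A = {α₁,…,αₙ} be an orthogonal set of nonzero functions in L²[0,T] and let h₁, h₂ ∈ L^∞[0,T] be such that both {α₁h₁,…,αₙh₁} and {α₁h₂,…,αₙh₂} are orthogonal in L²[0,T]. If s ∈ L^∞[0,T] satisfies s² = h₁² + h₂² a.e., then {α₁s,…,αₙs} is also orthogonal in L²[0,T], with ‖αⱼs‖₂² = ‖αⱼh₁‖₂² + ‖αⱼh₂‖₂² for each j. -/
/-!
Pointwise, `(αᵢ s)(αⱼ s) = αᵢ αⱼ s² = (αᵢ h₁)(αⱼ h₁) + (αᵢ h₂)(αⱼ h₂)` almost everywhere, so every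
Gram entry for `s` is the sum of those for `h₁` and `h₂`; the integrals split because each `αᵢ h`
is again in `L²` and products of `L²` functions are integrable.
-/

open MeasureTheory

/-- The `L²[0,T]` inner product `(f,g)₂ = ∫₀ᵀ f(t) g(t) dt`. -/
noncomputable def innerL2 (T : ℝ) (f g : ℝ → ℝ) : ℝ := ∫ t in Set.Icc (0:ℝ) T, f t * g t

section

variable {X : Type*} [MeasurableSpace X] {μ : Measure X}

theorem MeasureTheory.MemLp.mul_of_abs_le {p : ENNReal} {f h : X → ℝ} (hf : MemLp f p μ)
    (hh : Measurable h) (hbdd : ∃ C, ∀ t, |h t| ≤ C) : MemLp (fun t => f t * h t) p μ := by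
  obtain ⟨C, hC⟩ := hbdd
  exact (memLp_top_of_bound hh.aestronglyMeasurable C (.of_forall hC)).mul' hf

theorem integral_mul_mul_eq_add_of_sq_eq_add_sq {f g h₁ h₂ s : X → ℝ}
    (hrel : ∀ᵐ t ∂μ, s t ^ 2 = h₁ t ^ 2 + h₂ t ^ 2)
    (hi₁ : Integrable (fun t => f t * h₁ t * (g t * h₁ t)) μ)
    (hi₂ : Integrable (fun t => f t * h₂ t * (g t * h₂ t)) μ) :
    ∫ t, f t * s t * (g t * s t) ∂μ
      = ∫ t, f t * h₁ t * (g t * h₁ t) ∂μ + ∫ t, f t * h₂ t * (g t * h₂ t) ∂μ := by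
  rw [← integral_add hi₁ hi₂]
  refine integral_congr_ae ?_
  filter_upwards [hrel] with t ht
  linear_combination f t * g t * ht

end

theorem stmt6_general (T : ℝ) (n : ℕ) (α : Fin n → ℝ → ℝ)
    (hαL2 : ∀ j, MemLp (α j) 2 (volume.restrict (Set.Icc 0 T)))
    (h₁ h₂ s : ℝ → ℝ)
    (hmeas₁ : Measurable h₁) (hmeas₂ : Measurable h₂)
    (hbdd₁ : ∃ C, ∀ t, |h₁ t| ≤ C) (hbdd₂ : ∃ C, ∀ t, |h₂ t| ≤ C)
    (horth₁ : ∀ i j, i ≠ j →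
      innerL2 T (fun t => α i t * h₁ t) (fun t => α j t * h₁ t) = 0)
    (horth₂ : ∀ i j, i ≠ j →
      innerL2 T (fun t => α i t * h₂ t) (fun t => α j t * h₂ t) = 0)
    (hrel : ∀ᵐ t ∂(volume.restrict (Set.Icc 0 T)), (s t) ^ 2 = (h₁ t) ^ 2 + (h₂ t) ^ 2) :
    (∀ i j, i ≠ j →
      innerL2 T (fun t => α i t * s t) (fun t => α j t * s t) = 0) ∧
    (∀ j, innerL2 T (fun t => α j t * s t) (fun t => α j t * s t)
      = innerL2 T (fun t => α j t * h₁ t) (fun t => α j t * h₁ t)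
        + innerL2 T (fun t => α j t * h₂ t) (fun t => α j t * h₂ t)) := by
  have key : ∀ i j,
      innerL2 T (fun t => α i t * s t) (fun t => α j t * s t)
        = innerL2 T (fun t => α i t * h₁ t) (fun t => α j t * h₁ t)
          + innerL2 T (fun t => α i t * h₂ t) (fun t => α j t * h₂ t) := fun i j =>
    integral_mul_mul_eq_add_of_sq_eq_add_sq hrel
      (((hαL2 i).mul_of_abs_le hmeas₁ hbdd₁).integrable_mul
        ((hαL2 j).mul_of_abs_le hmeas₁ hbdd₁))
      (((hαL2 i).mul_of_abs_le hmeas₂ hbdd₂).integrable_mul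
        ((hαL2 j).mul_of_abs_le hmeas₂ hbdd₂))
  refine ⟨fun i j hij => ?_, fun j => key j j⟩
  rw [key i j, horth₁ i j hij, horth₂ i j hij, add_zero]

theorem stmt6 (T : ℝ) (hT : 0 < T) (n : ℕ) (α : Fin n → ℝ → ℝ)
    (hαmeas : ∀ j, Measurable (α j))
    (hαL2 : ∀ j, MemLp (α j) 2 (volume.restrict (Set.Icc 0 T)))
    (hαne : ∀ j, 0 < innerL2 T (α j) (α j))
    (hαorth : ∀ i j, i ≠ j → innerL2 T (α i) (α j) = 0)
    (h₁ h₂ s : ℝ → ℝ)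
    (hmeas₁ : Measurable h₁) (hmeas₂ : Measurable h₂) (hmeass : Measurable s)
    (hbdd₁ : ∃ C, ∀ t, |h₁ t| ≤ C) (hbdd₂ : ∃ C, ∀ t, |h₂ t| ≤ C)
    (hbdds : ∃ C, ∀ t, |s t| ≤ C)
    (horth₁ : ∀ i j, i ≠ j →
      innerL2 T (fun t => α i t * h₁ t) (fun t => α j t * h₁ t) = 0)
    (horth₂ : ∀ i j, i ≠ j →
      innerL2 T (fun t => α i t * h₂ t) (fun t => α j t * h₂ t) = 0)
    (hrel : ∀ᵐ t ∂(volume.restrict (Set.Icc 0 T)), (s t) ^ 2 = (h₁ t) ^ 2 + (h₂ t) ^ 2) :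
    (∀ i j, i ≠ j →
      innerL2 T (fun t => α i t * s t) (fun t => α j t * s t) = 0) ∧
    (∀ j, innerL2 T (fun t => α j t * s t) (fun t => α j t * s t)
      = innerL2 T (fun t => α j t * h₁ t) (fun t => α j t * h₁ t)
        + innerL2 T (fun t => α j t * h₂ t) (fun t => α j t * h₂ t)) :=
  stmt6_general T n α hαL2 h₁ h₂ s hmeas₁ hmeas₂ hbdd₁ hbdd₂ horth₁ horth₂ hrel
end

section
/- Let A = {α₁,…,αₙ} be an orthogonal set in L²[0,T]. Then the set O_∞(A) of nonzero h ∈ L^∞[0,T] with Ah orthogonal in L²[0,T] is closed under the rotation operation: if h₁, h₂ ∈ O_∞(A) ∪ {0} and s² = h₁² + h₂² a.e. with s ∈ L^∞[0,T], then s ∈ O_∞(A) ∪ {0}. -/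
open MeasureTheory

/-- Membership in `O_∞(A) ∪ {0}`: `h` is an essentially bounded measurable function which
is either (scale-invariant) zero or has positive `L²`-norm, and in either case
`Ah = {α₁h,…,αₙh}` is an orthogonal family in `L²[0,T]`. -/
def MemOInftyZero (T : ℝ) {n : ℕ} (α : Fin n → ℝ → ℝ) (h : ℝ → ℝ) : Prop :=
  Measurable h ∧ (∃ C, ∀ t, |h t| ≤ C) ∧
    (∀ i j, i ≠ j → innerL2 T (fun t => α i t * h t) (fun t => α j t * h t) = 0)

/-! The inner product `⟨αᵢ h, αⱼ h⟩` is `∫ αᵢ αⱼ h²`, which depends on `h` only through `h²` and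
is additive in `h²`; so `s² = h₁² + h₂²` gives `⟨αᵢ s, αⱼ s⟩ = ⟨αᵢ h₁, αⱼ h₁⟩ + ⟨αᵢ h₂, αⱼ h₂⟩`. -/

section

variable {X : Type*} [MeasurableSpace X] {μ : Measure X}

lemma MeasureTheory.Integrable.mul_sq_of_bounded {f h : X → ℝ} (hf : Integrable f μ)
    (hh : Measurable h) (hbdd : ∃ C, ∀ t, |h t| ≤ C) : Integrable (fun t => f t * h t ^ 2) μ := by
  obtain ⟨C, hC⟩ := hbdd
  refine hf.mul_bdd (c := C ^ 2) (hh.pow_const 2).aestronglyMeasurable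
    (Filter.Eventually.of_forall fun t => ?_)
  rw [Real.norm_eq_abs, abs_pow]
  exact pow_le_pow_left₀ (abs_nonneg _) (hC t) 2

lemma integral_mul_sq_eq_add_of_sq_eq_add {f h₁ h₂ s : X → ℝ} (hf : Integrable f μ)
    (hm₁ : Measurable h₁) (hb₁ : ∃ C, ∀ t, |h₁ t| ≤ C)
    (hm₂ : Measurable h₂) (hb₂ : ∃ C, ∀ t, |h₂ t| ≤ C)
    (hrel : ∀ᵐ t ∂μ, s t ^ 2 = h₁ t ^ 2 + h₂ t ^ 2) :
    ∫ t, f t * s t ^ 2 ∂μ = ∫ t, f t * h₁ t ^ 2 ∂μ + ∫ t, f t * h₂ t ^ 2 ∂μ := by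
  rw [← integral_add (hf.mul_sq_of_bounded hm₁ hb₁) (hf.mul_sq_of_bounded hm₂ hb₂)]
  refine integral_congr_ae ?_
  filter_upwards [hrel] with t ht
  rw [ht, mul_add]

end

lemma innerL2_mul_mul_eq_integral (T : ℝ) (a b h : ℝ → ℝ) :
    innerL2 T (fun t => a t * h t) (fun t => b t * h t)
      = ∫ t in Set.Icc 0 T, a t * b t * h t ^ 2 := by
  unfold innerL2
  congr 1 with t
  ring

theorem stmt7_general (T : ℝ) (n : ℕ) (α : Fin n → ℝ → ℝ)
    (hαL2 : ∀ j, MemLp (α j) 2 (volume.restrict (Set.Icc 0 T)))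
    (h₁ h₂ s : ℝ → ℝ)
    (hh₁ : MemOInftyZero T α h₁) (hh₂ : MemOInftyZero T α h₂)
    (hmeass : Measurable s) (hbdds : ∃ C, ∀ t, |s t| ≤ C)
    (hrel : ∀ᵐ t ∂(volume.restrict (Set.Icc 0 T)), (s t) ^ 2 = (h₁ t) ^ 2 + (h₂ t) ^ 2) :
    MemOInftyZero T α s := by
  obtain ⟨hm₁, hb₁, ho₁⟩ := hh₁
  obtain ⟨hm₂, hb₂, ho₂⟩ := hh₂
  refine ⟨hmeass, hbdds, fun i j hij => ?_⟩
  have hαα : Integrable (fun t => α i t * α j t) (volume.restrict (Set.Icc 0 T)) :=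
    (hαL2 i).integrable_mul (hαL2 j)
  have h₁ij := ho₁ i j hij
  have h₂ij := ho₂ i j hij
  rw [innerL2_mul_mul_eq_integral] at h₁ij h₂ij ⊢
  rw [integral_mul_sq_eq_add_of_sq_eq_add hαα hm₁ hb₁ hm₂ hb₂ hrel, h₁ij, h₂ij, add_zero]

theorem stmt7 (T : ℝ) (hT : 0 < T) (n : ℕ) (α : Fin n → ℝ → ℝ)
    (hαmeas : ∀ j, Measurable (α j))
    (hαL2 : ∀ j, MemLp (α j) 2 (volume.restrict (Set.Icc 0 T)))
    (hαorth : ∀ i j, i ≠ j → innerL2 T (α i) (α j) = 0)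
    (h₁ h₂ s : ℝ → ℝ)
    (hh₁ : MemOInftyZero T α h₁) (hh₂ : MemOInftyZero T α h₂)
    (hmeass : Measurable s) (hbdds : ∃ C, ∀ t, |s t| ≤ C)
    (hrel : ∀ᵐ t ∂(volume.restrict (Set.Icc 0 T)), (s t) ^ 2 = (h₁ t) ^ 2 + (h₂ t) ^ 2) :
    MemOInftyZero T α s :=
  stmt7_general T n α hαL2 h₁ h₂ s hh₁ hh₂ hmeass hbdds hrel
end
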